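/- arXiv:2308.08455 — 2 statements merged into one kernel-verified Lean document; each statement's English description precedes it below -/
import Mathlib

section
/- For all natural numbers i, l, and every positive integer β, the following identity holds: ∑_{j=0}^{β-1} C(j, i) * (-(β-1-j))^l = (-1)^l * ∑_{j≥0} j! * S(l, j) * C(β, i+j+1), where S(l, j) is the Stirling number of the second kind. In particular the left-hand side is a polynomial in β of degree at most l+i+1. -/
/-!
With `a + b = β - 1`, the left side is `(-1)^l ∑_{a+b=β-1} C(a,i) b^l`. Expanding
`b^l = ∑_k S(l,k) k! C(b,k)` in falling factorials and summing over the antidiagonal with the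
upper Chu–Vandermonde identity `∑_{a+b=n} C(a,i) C(b,k) = C(n+1, i+k+1)` gives the right side.
-/

/-- Stirling numbers of the second kind. -/
def stirling2 : ℕ → ℕ → ℕ
  | 0, 0 => 1
  | 0, _ + 1 => 0
  | _ + 1, 0 => 0
  | l + 1, j + 1 => stirling2 l j + (j + 1) * stirling2 l (j + 1)

theorem stirling2_eq_stirlingSecond : stirling2 = Nat.stirlingSecond := by
  funext l j
  induction l generalizing j with
  | zero => cases j <;> rfl
  | succ l ih =>
    cases j with
    | zero => rfl
    | succ j => rw [stirling2, Nat.stirlingSecond_succ_succ, ih, ih, add_comm]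

open Finset

namespace Nat

theorem descFactorial_succ_add_mul_descFactorial (n k : ℕ) :
    n.descFactorial (k + 1) + k * n.descFactorial k = n * n.descFactorial k := by
  rcases le_or_gt k n with hkn | hnk
  · rw [descFactorial_succ, ← add_mul, Nat.sub_add_cancel hkn]
  · simp [descFactorial_eq_zero_iff_lt.mpr hnk]

theorem pow_eq_sum_stirlingSecond_mul_descFactorial (n l : ℕ) :
    n ^ l = ∑ k ∈ range (l + 1), stirlingSecond l k * n.descFactorial k := by
  induction l with
  | zero => simp
  | succ l ih =>
    set g : ℕ → ℕ := fun k ↦ k * stirlingSecond l k * n.descFactorial k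
    have hshift : ∑ k ∈ range (l + 1), g (k + 1) = ∑ k ∈ range (l + 1), g k := by
      have hlast : g (l + 1) = 0 := by simp [g, stirlingSecond_eq_zero_of_lt (lt_add_one l)]
      have := (sum_range_succ' g (l + 1)).symm.trans (sum_range_succ g (l + 1))
      simpa [g, hlast] using this
    calc n ^ (l + 1)
        = ∑ k ∈ range (l + 1), stirlingSecond l k * (n * n.descFactorial k) := by
          rw [pow_succ, ih, sum_mul]; exact sum_congr rfl fun k _ ↦ by ring
      _ = ∑ k ∈ range (l + 1), stirlingSecond l k * n.descFactorial (k + 1)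
          + ∑ k ∈ range (l + 1), g k := by
          rw [← sum_add_distrib]
          exact sum_congr rfl fun k _ ↦ by
            rw [← descFactorial_succ_add_mul_descFactorial]; ring
      _ = ∑ k ∈ range (l + 2), stirlingSecond (l + 1) k * n.descFactorial k := by
          rw [← hshift, ← sum_add_distrib,
            sum_range_succ' (fun k ↦ stirlingSecond (l + 1) k * n.descFactorial k)]
          simp only [stirlingSecond_succ_succ, stirlingSecond_succ_zero, zero_mul, add_zero, g]
          exact sum_congr rfl fun k _ ↦ by ring

theorem sum_antidiagonal_choose_mul_choose (n i m : ℕ) :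
    ∑ p ∈ antidiagonal n, p.1.choose i * p.2.choose m = (n + 1).choose (i + m + 1) := by
  induction n generalizing i with
  | zero => cases i <;> cases m <;> simp [choose_succ_succ, ← add_assoc]
  | succ n ih =>
    rw [Nat.sum_antidiagonal_succ]
    cases i with
    | zero =>
      have h0 := ih 0
      simp only [choose_zero_right, one_mul, zero_add] at h0 ⊢
      rw [h0, choose_succ_succ (n + 1) m]
    | succ i =>
      have hpascal : ∑ p ∈ antidiagonal n, (p.1 + 1).choose (i + 1) * p.2.choose m
          = ∑ p ∈ antidiagonal n, p.1.choose i * p.2.choose m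
            + ∑ p ∈ antidiagonal n, p.1.choose (i + 1) * p.2.choose m := by
        rw [← sum_add_distrib]
        exact sum_congr rfl fun p _ ↦ by rw [choose_succ_succ', add_mul]
      rw [hpascal, ih, ih, choose_zero_succ, zero_mul, zero_add,
        show i + 1 + m + 1 = i + m + 1 + 1 by ring, choose_succ_succ' (n + 1)]

theorem sum_antidiagonal_choose_mul_pow (n i l : ℕ) :
    ∑ p ∈ antidiagonal n, p.1.choose i * p.2 ^ l
      = ∑ k ∈ range (l + 1), k ! * stirlingSecond l k * (n + 1).choose (i + k + 1) := by
  simp only [pow_eq_sum_stirlingSecond_mul_descFactorial _ l, descFactorial_eq_factorial_mul_choose,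
    mul_sum]
  rw [sum_comm]
  refine sum_congr rfl fun k _ ↦ ?_
  rw [← sum_antidiagonal_choose_mul_choose, mul_sum]
  exact sum_congr rfl fun p _ ↦ by ring

end Nat

theorem choose_mul_pow_sum_eq_stirling_general (i l : ℕ) (β : ℕ) :
    ∑ j ∈ Finset.range β, (j.choose i : ℤ) * (-((β : ℤ) - 1 - j)) ^ l
      = (-1 : ℤ) ^ l *
          ∑ j ∈ Finset.range (l + 1),
            (j.factorial : ℤ) * (stirling2 l j : ℤ) * (β.choose (i + j + 1) : ℤ) := by
  rcases β with _ | n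
  · simp
  have hnat : ∑ j ∈ range (n + 1), j.choose i * (n - j) ^ l
      = ∑ k ∈ range (l + 1), k.factorial * l.stirlingSecond k * (n + 1).choose (i + k + 1) :=
    (Nat.sum_antidiagonal_eq_sum_range_succ (fun a b ↦ a.choose i * b ^ l) n).symm.trans
      (Nat.sum_antidiagonal_choose_mul_pow n i l)
  calc ∑ j ∈ range (n + 1), (j.choose i : ℤ) * (-((↑(n + 1) : ℤ) - 1 - j)) ^ l
      = (-1) ^ l * ∑ j ∈ range (n + 1), ((j.choose i * (n - j) ^ l : ℕ) : ℤ) := by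
        rw [mul_sum]
        refine sum_congr rfl fun j hj ↦ ?_
        rw [show -((↑(n + 1) : ℤ) - 1 - j) = -1 * ((n - j : ℕ) : ℤ) by
          push_cast [Nat.cast_sub (mem_range_succ_iff.mp hj)]; ring]
        push_cast
        ring
    _ = _ := by rw [← Nat.cast_sum, hnat, stirling2_eq_stirlingSecond]; push_cast; rfl

/-- `∑_{j=0}^{β-1} C(j,i)·(-(β-1-j))^l = (-1)^l ∑_{j≥0} j!·S(l,j)·C(β,i+j+1)`
(the right-hand sum is finite since `S(l,j)=0` for `j > l`). -/
theorem choose_mul_pow_sum_eq_stirling (i l : ℕ) (β : ℕ) (hβ : 0 < β) :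
    ∑ j ∈ Finset.range β, (j.choose i : ℤ) * (-((β : ℤ) - 1 - j)) ^ l
      = (-1 : ℤ) ^ l *
          ∑ j ∈ Finset.range (l + 1),
            (j.factorial : ℤ) * (stirling2 l j : ℤ) * (β.choose (i + j + 1) : ℤ) :=
  choose_mul_pow_sum_eq_stirling_general i l β
end

section
/- Fix natural numbers g ≥ 1, n ≥ 1, and b with b ≤ 4g + n - 3 and b ≥ 2g - 3. Then ∑_{k=0}^{2g+n} (1/(k + 2g - b - 3)!) * (B_{2g+n-k} / ((2g+n-k)! * 2^k)) = (1 - 2^{4g+n-b-4}) / 2^{2g+n-1} * B_{4g+n-b-3} / (4g+n-b-3)!, where terms with negative factorial argument are taken to be zero. -/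
/-!
Reflecting the summation index to `i = 2g + n - k` and writing `m = 4g + n - 3 - b`,
`M = b + 3 - 2g`, only the terms with `i ≤ m` survive, and the sum becomes
`(2^M m!)⁻¹ ∑_{i ≤ m} C(m, i) B_i (1/2)^(m-i) = B_m(1/2) / (2^M m!)`.
The value `B_m(1/2) = (2^(1-m) - 1) B_m` follows from the generating function
`X e^(X/2) / (e^X - 1) = 2 · (X/2) / (e^(X/2) - 1) - X / (e^X - 1)`.
-/

open PowerSeries in
theorem bernoulli_generating_function_one_half :
    (mk fun n => Polynomial.aeval (1 / 2 : ℚ) ((1 / n.factorial : ℚ) • Polynomial.bernoulli n)) =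
      2 * rescale (1 / 2) (bernoulliPowerSeries ℚ) - bernoulliPowerSeries ℚ := by
  set u : ℚ⟦X⟧ := rescale (1 / 2) (exp ℚ)
  have hexp : exp ℚ - 1 = (u - 1) * (u + 1) := by
    have : u * u = exp ℚ := by rw [exp_mul_exp_eq_exp_add]; norm_num
    rw [← this]; ring
  have hhalf : 2 * (rescale (1 / 2) (bernoulliPowerSeries ℚ) * (u - 1)) = X := by
    have := congrArg (rescale (1 / 2 : ℚ)) (bernoulliPowerSeries_mul_exp_sub_one ℚ)
    rw [map_mul, map_sub, map_one, rescale_X] at this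
    rw [this, ← mul_assoc, ← map_ofNat C 2, ← map_mul]
    norm_num
  have hne : exp ℚ - 1 ≠ 0 := by
    intro h
    simpa [coeff_exp] using congrArg (coeff 1) h
  refine mul_right_cancel₀ hne ?_
  rw [Polynomial.bernoulli_generating_function, sub_mul, bernoulliPowerSeries_mul_exp_sub_one,
    hexp, ← hhalf]
  ring

open PowerSeries in
theorem Polynomial.bernoulli_eval_one_half (m : ℕ) :
    (bernoulli m).eval (1 / 2 : ℚ) = (2 ^ (1 - (m : ℤ)) - 1) * _root_.bernoulli m := by
  have h := congrArg (PowerSeries.coeff m) bernoulli_generating_function_one_half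
  rw [PowerSeries.coeff_mk, map_smul, coe_aeval_eq_eval, smul_eq_mul, map_sub,
    ← map_ofNat PowerSeries.C 2, PowerSeries.coeff_C_mul, coeff_rescale, bernoulliPowerSeries,
    PowerSeries.coeff_mk, Algebra.algebraMap_self, RingHom.id_apply] at h
  have hpow : (2 : ℚ) ^ (1 - (m : ℤ)) = 2 * (1 / 2) ^ m := by
    rw [zpow_sub₀ two_ne_zero, zpow_one, zpow_natCast, one_div_pow, mul_one_div]
  have hm : (m.factorial : ℚ) ≠ 0 := by positivity
  rw [hpow]
  field_simp at h
  linear_combination h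

open Finset in
theorem sum_bernoulli_div_factorial_mul_two_pow (M m : ℕ) :
    ∑ i ∈ range (m + 1),
        ((m - i).factorial : ℚ)⁻¹ * bernoulli i / (i.factorial * 2 ^ (M + (m - i))) =
      (2 ^ (1 - (m : ℤ)) - 1) * bernoulli m / (2 ^ M * m.factorial) := by
  rw [← Polynomial.bernoulli_eval_one_half, Polynomial.bernoulli, Polynomial.eval_finsetSum,
    sum_div]
  refine sum_congr rfl fun i hi => ?_
  have hi : i ≤ m := mem_range_succ_iff.mp hi
  rw [Polynomial.eval_monomial, Nat.cast_choose ℚ hi, pow_add, one_div_pow]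
  field_simp

theorem two_zpow_one_sub_sub_one_mul_div (M m : ℕ) (h : 1 ≤ M + m) (c d : ℚ) :
    (2 ^ (1 - (m : ℤ)) - 1) * c / (2 ^ M * d) =
      (1 - 2 ^ ((m : ℤ) - 1)) / 2 ^ (M + m - 1) * c / d := by
  rw [← zpow_natCast 2 (M + m - 1), Nat.cast_sub h, Nat.cast_add, Nat.cast_one,
    show (M : ℤ) + m - 1 = M + (m - 1) by ring, zpow_add₀ two_ne_zero, zpow_natCast,
    show (1 : ℤ) - m = -(m - 1) by ring, zpow_neg]
  have : (2 : ℚ) ^ ((m : ℤ) - 1) ≠ 0 := by positivity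
  field_simp

theorem bernoulli_constant_C_general (g n b : ℕ)
    (hb₁ : (b : ℤ) ≤ 4 * g + n - 3) (hb₂ : (2 * g : ℤ) - 3 ≤ b) :
    ∑ k ∈ Finset.range (2 * g + n + 1),
        (if (k : ℤ) + 2 * g - b - 3 < 0 then (0 : ℚ)
          else ((((k : ℤ) + 2 * g - b - 3).toNat.factorial : ℚ))⁻¹) *
          bernoulli (2 * g + n - k) / ((2 * g + n - k).factorial * 2 ^ k)
      = (1 - (2 : ℚ) ^ ((4 * g + n : ℤ) - b - 4)) / 2 ^ (2 * g + n - 1) *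
          bernoulli (4 * g + n - 3 - b) / (4 * g + n - 3 - b).factorial := by
  obtain ⟨M, hM⟩ : ∃ M, b + 3 = 2 * g + M := ⟨b + 3 - 2 * g, by omega⟩
  set m := 4 * g + n - 3 - b
  have hN : 2 * g + n = M + m := by omega
  rw [← Finset.sum_range_reflect, show 2 * g + n + 1 = m + 1 + M by omega, Finset.sum_range_add,
    Finset.sum_eq_zero (s := Finset.range M) fun i hi => ?vanish, add_zero,
    Finset.sum_congr rfl fun i hi => ?term, sum_bernoulli_div_factorial_mul_two_pow,
    show (4 * g + n : ℤ) - b - 4 = m - 1 by omega, hN]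
  · exact two_zpow_one_sub_sub_one_mul_div M m (by omega) _ _
  case vanish =>
    have hi : i < M := Finset.mem_range.mp hi
    rw [if_pos (by omega), zero_mul, zero_div]
  case term =>
    have hi : i ≤ m := Finset.mem_range_succ_iff.mp hi
    rw [show m + 1 + M - 1 - i = M + (m - i) by omega, if_neg (by omega),
      show ((M + (m - i) : ℕ) + 2 * g - b - 3 : ℤ).toNat = m - i by omega,
      show 2 * g + n - (M + (m - i)) = i by omega]

/-- Closed-form evaluation of the constant `C_{b,g,n}` (times `(b+3-2g)!`):
`∑_{k=0}^{2g+n} (1/(k+2g-b-3)!)·B_{2g+n-k}/((2g+n-k)!·2^k)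
  = (1 - 2^{4g+n-b-4})/2^{2g+n-1} · B_{4g+n-b-3}/(4g+n-b-3)!`,
where `1/(k+2g-b-3)!` is interpreted as `0` whenever `k+2g-b-3 < 0`. -/
theorem bernoulli_constant_C (g n b : ℕ) (hg : 1 ≤ g) (hn : 1 ≤ n)
    (hb₁ : (b : ℤ) ≤ 4 * g + n - 3) (hb₂ : (2 * g : ℤ) - 3 ≤ b) :
    ∑ k ∈ Finset.range (2 * g + n + 1),
        (if (k : ℤ) + 2 * g - b - 3 < 0 then (0 : ℚ)
          else ((((k : ℤ) + 2 * g - b - 3).toNat.factorial : ℚ))⁻¹) *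
          bernoulli (2 * g + n - k) / ((2 * g + n - k).factorial * 2 ^ k)
      = (1 - (2 : ℚ) ^ ((4 * g + n : ℤ) - b - 4)) / 2 ^ (2 * g + n - 1) *
          bernoulli (4 * g + n - 3 - b) / (4 * g + n - 3 - b).factorial :=
  bernoulli_constant_C_general g n b hb₁ hb₂
end
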